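/- For the Lie algebra Φ''(Δ) (brackets [e₁,e₄]=[e₂,e₃]=-e₁, [e₂,e₄]=-e₃, [e₃,e₄]=-e₃+Δe₂), the functional F=e₁* is Frobenius, its principal element is e₄, and the characteristic polynomial of ad(e₄) is x(x-1)(x² - x + Δ); hence over ℂ the spectrum is {0, 1, (1±√(1-4Δ))/2}. -/

import Mathlib

open Polynomial

noncomputable section

/-- The bracket of `Φ″(Δ)` on `Fin 4 → ℂ`, basis `e₁,…,e₄` indexed `0,…,3`:
`[e₁,e₄]=[e₂,e₃]=-e₁`, `[e₂,e₄]=-e₃`, `[e₃,e₄]=-e₃+Δe₂`. -/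
def brPhi2 (Δ : ℂ) (x y : Fin 4 → ℂ) : Fin 4 → ℂ :=
  ![ -(x 0 * y 3 - x 3 * y 0) - (x 1 * y 2 - x 2 * y 1),
     Δ * (x 2 * y 3 - x 3 * y 2),
     -(x 1 * y 3 - x 3 * y 1) - (x 2 * y 3 - x 3 * y 2),
     0 ]

/-!
The Kirillov form `(x, y) ↦ e₁*([x, y])` has an antidiagonal Gram matrix of determinant `1`, so
it is nondegenerate and `e₁*` is Frobenius. Since `e₁*([e₄, x])` is the `e₁`-coordinate of `x`,
the principal element is `e₄`. In the basis `e₁, …, e₄`, `ad e₄` is `1 ⊕ [[0, -Δ], [1, 1]] ⊕ 0`,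
whence the characteristic polynomial; its roots are the eigenvalues, and the quadratic factor is
solved by the quadratic formula.
-/

open Matrix

theorem Matrix.exists_linearEquiv_dual_of_det_ne_zero {K ι : Type*} [Field K] [Fintype ι]
    [DecidableEq ι] (A : Matrix ι ι K) (hA : A.det ≠ 0) :
    ∃ η : (ι → K) ≃ₗ[K] Module.Dual K (ι → K), ∀ x y, η x y = x ⬝ᵥ A *ᵥ y :=
  ⟨(toBilin' A).toDual (LinearMap.BilinForm.nondegenerate_toBilin'_of_det_ne_zero' A hA),
    fun x y => by rw [LinearMap.BilinForm.toDual_def, toBilin'_apply']⟩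

theorem sq_sub_self_add_eq_zero_iff {K : Type*} [Field K] [NeZero (2 : K)] {Δ s : K}
    (hs : s ^ 2 = 1 - 4 * Δ) (μ : K) :
    μ ^ 2 - μ + Δ = 0 ↔ μ = (1 + s) / 2 ∨ μ = (1 - s) / 2 := by
  have hdiscrim : discrim 1 (-1) Δ = s * s := by rw [discrim, ← sq, hs]; ring
  convert quadratic_eq_zero_iff one_ne_zero hdiscrim μ using 2 <;> ring_nf

def kirillovGram : Matrix (Fin 4) (Fin 4) ℂ := !![0, 0, 0, -1; 0, 0, -1, 0; 0, 1, 0, 0; 1, 0, 0, 0]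

theorem brPhi2_apply_zero (Δ : ℂ) (x y : Fin 4 → ℂ) :
    brPhi2 Δ x y 0 = x ⬝ᵥ kirillovGram *ᵥ y := by
  simp only [brPhi2, kirillovGram, dotProduct, mulVec, Fin.sum_univ_four, of_apply, cons_val',
    cons_val_zero, cons_val_one, cons_val, cons_val_fin_one]
  ring

theorem det_kirillovGram : kirillovGram.det = 1 := by
  simp [kirillovGram, det_succ_row_zero, Fin.sum_univ_succ, Fin.succAbove]
  norm_num

theorem brPhi2_single_three_apply_zero (Δ : ℂ) (x : Fin 4 → ℂ) :
    brPhi2 Δ (Pi.single 3 1) x 0 = x 0 := by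
  simp [brPhi2]

def adE4 (Δ : ℂ) : Matrix (Fin 4) (Fin 4) ℂ := !![1, 0, 0, 0; 0, 0, -Δ, 0; 0, 1, 1, 0; 0, 0, 0, 0]

theorem adE4_mulVec (Δ : ℂ) (x : Fin 4 → ℂ) : adE4 Δ *ᵥ x = brPhi2 Δ (Pi.single 3 1) x := by
  ext i
  fin_cases i <;> simp [adE4, brPhi2, mulVec, dotProduct, Fin.sum_univ_four]

theorem charpoly_adE4 (Δ : ℂ) : (adE4 Δ).charpoly = X * (X - 1) * (X ^ 2 - X + C Δ) := by
  simp [charpoly, charmatrix, adE4, det_succ_row_zero, Fin.sum_univ_succ]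
  ring

/-- For `Φ″(Δ)`: `F = e₁*` is Frobenius, its principal element is `e₄`, the
characteristic polynomial of `ad e₄` is `x (x-1) (x² - x + Δ)`, and hence over
ℂ the spectrum is `{0, 1, (1 ± √(1-4Δ))/2}`. -/
theorem phi2_frobenius_principal_spectrum (Δ : ℂ) :
    (∃ η : (Fin 4 → ℂ) ≃ₗ[ℂ] Module.Dual ℂ (Fin 4 → ℂ),
      ∀ x y : Fin 4 → ℂ, η x y = brPhi2 Δ x y 0) ∧
    (∀ x : Fin 4 → ℂ, brPhi2 Δ (Pi.single 3 1) x 0 = x 0) ∧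
    ∃ M : Matrix (Fin 4) (Fin 4) ℂ,
      (∀ x : Fin 4 → ℂ, M.mulVec x = brPhi2 Δ (Pi.single 3 1) x) ∧
      M.charpoly = X * (X - 1) * (X ^ 2 - X + C Δ) ∧
      ∀ s : ℂ, s ^ 2 = 1 - 4 * Δ →
        ∀ μ : ℂ, Module.End.HasEigenvalue (Matrix.toLin' M) μ ↔
          μ ∈ ({0, 1, (1 + s) / 2, (1 - s) / 2} : Set ℂ) := by
  refine ⟨?_, brPhi2_single_three_apply_zero Δ, adE4 Δ, adE4_mulVec Δ, charpoly_adE4 Δ, ?_⟩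
  · obtain ⟨η, hη⟩ := kirillovGram.exists_linearEquiv_dual_of_det_ne_zero
      (det_kirillovGram ▸ one_ne_zero)
    exact ⟨η, fun x y => by rw [hη, brPhi2_apply_zero]⟩
  · intro s hs μ
    rw [Module.End.hasEigenvalue_iff_isRoot_charpoly, Matrix.charpoly_toLin', charpoly_adE4]
    simp only [IsRoot.def, eval_mul, eval_add, eval_sub, eval_pow, eval_X, eval_C, eval_one,
      mul_eq_zero, sub_eq_zero, sq_sub_self_add_eq_zero_iff hs, Set.mem_insert_iff,
      Set.mem_singleton_iff, or_assoc]
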